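/- arXiv:2503.08371 — 10 statements merged into one kernel-verified Lean document; each statement's English description precedes it below -/
import Mathlib

section
/- Let H be a complex Hilbert space, Σ a positive bounded operator on H, B ≥ 0, β a real number with 1 < β ≤ 3, and ψ ∈ H with ‖ψ‖ ≤ B. Set φ₀ = Σ^{(β−1)/2} ψ, the power being defined via the continuous functional calculus. For λ > 0, let φ_λ ∈ H be the unique solution of Σφ_λ + λφ_λ = Σφ₀ (i.e. φ_λ = (Σ + λ·1)⁻¹ Σ φ₀). Then ‖φ_λ − φ₀‖ ≤ B · λ^{(β−1)/2}. -/
/-!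
With `r = (β - 1) / 2` and `g(t) = λ t ^ r / (t + λ)`, the functional calculus gives
`(Σ + λ) g(Σ) = λ Σ ^ r`, so `(Σ + λ)(φ_λ - φ₀) = -λ φ₀ = -(Σ + λ) g(Σ) ψ`, and `Σ + λ` is
invertible since `Σ ≥ 0`. Hence `φ_λ - φ₀ = -g(Σ) ψ` and `‖φ_λ - φ₀‖ ≤ sup_{t ≥ 0} g(t) · B`.
For `0 ≤ r ≤ 1`, weighted AM-GM gives `t ^ r λ ^ (1 - r) ≤ r t + (1 - r) λ ≤ t + λ`, i.e.
`g(t) ≤ λ ^ r`.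
-/

lemma mul_rpow_div_add_le_rpow {r t lam : ℝ} (hr₀ : 0 ≤ r) (hr₁ : r ≤ 1) (ht : 0 ≤ t)
    (hlam : 0 < lam) : lam * t ^ r / (t + lam) ≤ lam ^ r := by
  have hsum : 0 < t + lam := by linarith
  rw [div_le_iff₀ hsum]
  have amgm : t ^ r * lam ^ (1 - r) ≤ r * t + (1 - r) * lam :=
    Real.geom_mean_le_arith_mean2_weighted hr₀ (by linarith) ht hlam.le (by ring)
  have hsplit : lam ^ r * lam ^ (1 - r) = lam := by
    rw [← Real.rpow_add hlam, add_sub_cancel, Real.rpow_one]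
  calc lam * t ^ r = lam ^ r * lam ^ (1 - r) * t ^ r := by rw [hsplit]
    _ = lam ^ r * (t ^ r * lam ^ (1 - r)) := by ring
    _ ≤ lam ^ r * (r * t + (1 - r) * lam) := by gcongr
    _ ≤ lam ^ r * (t + lam) := by
      gcongr <;> nlinarith

lemma add_algebraMap_mul_cfc_div_add {A : Type*} [TopologicalSpace A] [Ring A] [StarRing A]
    [Algebra ℝ A] [ContinuousFunctionalCalculus ℝ A IsSelfAdjoint] {a : A} (ha : IsSelfAdjoint a) {lam : ℝ}
    (hlam : ∀ t ∈ spectrum ℝ a, t + lam ≠ 0) (f : ℝ → ℝ)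
    (hf : ContinuousOn f (spectrum ℝ a)) :
    (a + algebraMap ℝ A lam) * cfc (fun t => f t / (t + lam)) a = cfc f a := by
  have hdiv : ContinuousOn (fun t => f t / (t + lam)) (spectrum ℝ a) :=
    hf.div (by fun_prop) hlam
  have hshift : a + algebraMap ℝ A lam = cfc (fun t => t + lam) a := by
    rw [cfc_add_const lam (fun t => t) a, cfc_id' ℝ a]
  rw [hshift, ← cfc_mul _ _ a (by fun_prop) hdiv]
  exact cfc_congr fun t ht => mul_div_cancel₀ (f t) (hlam t ht)

lemma norm_cfc_mul_rpow_div_add_le {A : Type*} [CStarAlgebra A] [PartialOrder A]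
    [StarOrderedRing A] {a : A} (ha : 0 ≤ a) {r lam : ℝ} (hr₀ : 0 ≤ r) (hr₁ : r ≤ 1)
    (hlam : 0 < lam) : ‖cfc (fun t : ℝ => lam * t ^ r / (t + lam)) a‖ ≤ lam ^ r := by
  refine norm_cfc_le (by positivity) fun t ht => ?_
  have ht₀ : 0 ≤ t := spectrum_nonneg_of_nonneg ha ht
  rw [Real.norm_of_nonneg (by positivity)]
  exact mul_rpow_div_add_le_rpow hr₀ hr₁ ht₀ hlam

theorem tikhonov_bias_bound_general
    {H : Type*} [NormedAddCommGroup H] [InnerProductSpace ℂ H] [CompleteSpace H]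
    (S : H →L[ℂ] H) (hS : S.IsPositive)
    (B : ℝ)
    (β : ℝ) (hβ : β ∈ Set.Ioc (1 : ℝ) 3)
    (ψ : H) (hψ : ‖ψ‖ ≤ B)
    (φ₀ : H) (hφ₀ : φ₀ = cfc (fun t : ℝ => t ^ ((β - 1) / 2)) S ψ)
    (lam : ℝ) (hlam : 0 < lam)
    (φlam : H) (hφlam : S φlam + (lam : ℂ) • φlam = S φ₀) :
    ‖φlam - φ₀‖ ≤ B * lam ^ ((β - 1) / 2) := by
  obtain ⟨hβ₁, hβ₃⟩ := hβ
  have hS₀ : 0 ≤ S := S.nonneg_iff_isPositive.mpr hS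
  have hshift : ∀ t ∈ spectrum ℝ S, t + lam ≠ 0 := fun t ht =>
    (add_pos_of_nonneg_of_pos (spectrum_nonneg_of_nonneg hS₀ ht) hlam).ne'
  have hpow : Continuous fun t : ℝ => t ^ ((β - 1) / 2) :=
    Real.continuous_rpow_const (by linarith)
  set T := S + algebraMap ℝ (H →L[ℂ] H) lam
  set R := cfc (fun t : ℝ => lam * t ^ ((β - 1) / 2) / (t + lam)) S
  have hT : ∀ x, T x = S x + (lam : ℂ) • x := fun x => by simp [T, Complex.coe_smul]
  have hTR : T * R = lam • cfc (fun t : ℝ => t ^ ((β - 1) / 2)) S := by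
    rw [add_algebraMap_mul_cfc_div_add hS.isSelfAdjoint hshift _
      (hpow.const_mul lam).continuousOn]
    exact cfc_const_mul lam _ S hpow.continuousOn
  have hT_unit : IsUnit T :=
    (IsStrictlyPositive.nonneg_add hS₀ (isStrictlyPositive_algebraMap hlam)).isUnit
  have hres : φlam - φ₀ = -R ψ := by
    apply (ContinuousLinearMap.isUnit_iff_bijective.mp hT_unit).injective
    rw [map_sub, map_neg, hT, hT, hφlam, ← mul_apply_eq_comp, hTR,
      smul_apply, ← hφ₀, Complex.coe_smul]
    abel
  calc ‖φlam - φ₀‖ = ‖R ψ‖ := by rw [hres, norm_neg]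
    _ ≤ ‖R‖ * ‖ψ‖ := R.le_opNorm ψ
    _ ≤ lam ^ ((β - 1) / 2) * B :=
      mul_le_mul (norm_cfc_mul_rpow_div_add_le hS₀ (by linarith) (by linarith) hlam) hψ
        (norm_nonneg _) (by positivity)
    _ = B * lam ^ ((β - 1) / 2) := mul_comm _ _

/-- Source-condition bias bound for Tikhonov regularization: if `S` is a positive
bounded operator on a complex Hilbert space, `φ₀ = S^((β−1)/2) ψ` with `‖ψ‖ ≤ B` and
`β ∈ (1, 3]`, and `φλ` solves `Sφλ + λφλ = Sφ₀` for `λ > 0`, then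
`‖φλ − φ₀‖ ≤ B·λ^((β−1)/2)`. -/
theorem tikhonov_bias_bound
    {H : Type*} [NormedAddCommGroup H] [InnerProductSpace ℂ H] [CompleteSpace H]
    (S : H →L[ℂ] H) (hS : S.IsPositive)
    (B : ℝ) (hB : 0 ≤ B)
    (β : ℝ) (hβ : β ∈ Set.Ioc (1 : ℝ) 3)
    (ψ : H) (hψ : ‖ψ‖ ≤ B)
    (φ₀ : H) (hφ₀ : φ₀ = cfc (fun t : ℝ => t ^ ((β - 1) / 2)) S ψ)
    (lam : ℝ) (hlam : 0 < lam)
    (φlam : H) (hφlam : S φlam + (lam : ℂ) • φlam = S φ₀) :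
    ‖φlam - φ₀‖ ≤ B * lam ^ ((β - 1) / 2) :=
  tikhonov_bias_bound_general S hS B β hβ ψ hψ φ₀ hφ₀ lam hlam φlam hφlam
end

section
/- Let (W, ν) and (A, α) be σ-finite measure spaces, and let p : W × A → [0,∞) be a measurable function, integrable with respect to ν ⊗ α, with p(w,a) > 0 for (ν⊗α)-almost every (w,a); set pW(w) = ∫ p(w,a) dα(a), pA(a) = ∫ p(w,a) dν(w), and r(w,a) = pW(w)·pA(a)/p(w,a). Let m : W × A → ℝ be measurable with ∫ m(w,a)² p(w,a) d(ν⊗α) < ∞ and ∫ (pW(w)pA(a))²/p(w,a) d(ν⊗α) < ∞. Then all integrals below are finite and ∫ (r(w,a) − m(w,a))² p(w,a) d(ν⊗α) = ∫ m(w,a)² p(w,a) d(ν⊗α) − 2 ∫ m(w,a) pW(w) pA(a) d(ν⊗α) + ∫ r(w,a)² p(w,a) d(ν⊗α). -/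
open MeasureTheory

/-- Loss-simplification identity: with joint density `p` on `W × A`, marginals
`pW, pA`, density ratio `r = pW·pA/p`, and a square-integrable (w.r.t. `p`) function `m`, all
integrals are finite and
`∫ (r − m)² p = ∫ m² p − 2 ∫ m·pW·pA + ∫ r² p`. -/
theorem density_ratio_loss_expansion
    {W A : Type*} [MeasurableSpace W] [MeasurableSpace A]
    (ν : Measure W) (α : Measure A) [SigmaFinite ν] [SigmaFinite α]
    (p : W × A → ℝ) (hp_meas : Measurable p) (hp_nonneg : ∀ x, 0 ≤ p x)
    (hp_int : Integrable p (ν.prod α))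
    (hp_pos : ∀ᵐ x ∂ν.prod α, 0 < p x)
    (pW : W → ℝ) (hpW : ∀ w, pW w = ∫ a, p (w, a) ∂α)
    (pA : A → ℝ) (hpA : ∀ a, pA a = ∫ w, p (w, a) ∂ν)
    (r : W × A → ℝ) (hr : ∀ x, r x = pW x.1 * pA x.2 / p x)
    (m : W × A → ℝ) (hm_meas : Measurable m)
    (hm2 : Integrable (fun x => m x ^ 2 * p x) (ν.prod α))
    (hr2 : Integrable (fun x => (pW x.1 * pA x.2) ^ 2 / p x) (ν.prod α)) :
    Integrable (fun x => (r x - m x) ^ 2 * p x) (ν.prod α) ∧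
    Integrable (fun x => m x * pW x.1 * pA x.2) (ν.prod α) ∧
    Integrable (fun x => r x ^ 2 * p x) (ν.prod α) ∧
    ∫ x, (r x - m x) ^ 2 * p x ∂ν.prod α =
      ∫ x, m x ^ 2 * p x ∂ν.prod α - 2 * ∫ x, m x * pW x.1 * pA x.2 ∂ν.prod α +
        ∫ x, r x ^ 2 * p x ∂ν.prod α := by
  -- measurability of marginals
  have hpW_meas : Measurable pW := by
    have h : Measurable fun w => ∫ a, p (w, a) ∂α :=
      (hp_meas.stronglyMeasurable.integral_prod_right').measurable
    have : pW = fun w => ∫ a, p (w, a) ∂α := funext hpW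
    rw [this]; exact h
  have hpA_meas : Measurable pA := by
    have h : Measurable fun a => ∫ w, p (w, a) ∂ν :=
      (hp_meas.stronglyMeasurable.integral_prod_left').measurable
    have : pA = fun a => ∫ w, p (w, a) ∂ν := funext hpA
    rw [this]; exact h
  have hr_meas : Measurable r := by
    have : r = fun x => pW x.1 * pA x.2 / p x := funext hr
    rw [this]
    exact ((hpW_meas.comp measurable_fst).mul (hpA_meas.comp measurable_snd)).div hp_meas
  -- r^2 * p integrable
  have hr2' : Integrable (fun x => r x ^ 2 * p x) (ν.prod α) := by
    refine hr2.congr ?_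
    filter_upwards [hp_pos] with x hx
    rw [hr]
    field_simp
  -- cross term integrable
  have hcross_meas : Measurable fun x => m x * pW x.1 * pA x.2 :=
    (hm_meas.mul (hpW_meas.comp measurable_fst)).mul (hpA_meas.comp measurable_snd)
  have hcross : Integrable (fun x => m x * pW x.1 * pA x.2) (ν.prod α) := by
    refine Integrable.mono' ((hm2.add hr2').div_const 2)
      hcross_meas.aestronglyMeasurable ?_
    filter_upwards [hp_pos] with x hx
    have hrp : r x * p x = pW x.1 * pA x.2 := by
      rw [hr]; field_simp
    have h0 : m x * pW x.1 * pA x.2 = m x * r x * p x := by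
      rw [mul_assoc, ← hrp]; ring
    rw [h0, Real.norm_eq_abs, abs_mul, abs_of_pos hx]
    have h2 : |m x * r x| ≤ (m x ^ 2 + r x ^ 2) / 2 := by
      rw [abs_mul]
      nlinarith [sq_nonneg (|m x| - |r x|), sq_abs (m x), sq_abs (r x),
        abs_nonneg (m x), abs_nonneg (r x)]
    calc |m x * r x| * p x ≤ (m x ^ 2 + r x ^ 2) / 2 * p x :=
          mul_le_mul_of_nonneg_right h2 (hp_nonneg x)
      _ = (m x ^ 2 * p x + r x ^ 2 * p x) / 2 := by ring
  -- a.e. expansion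
  have hexp : (fun x => (r x - m x) ^ 2 * p x) =ᵐ[ν.prod α]
      fun x => m x ^ 2 * p x - 2 * (m x * pW x.1 * pA x.2) + r x ^ 2 * p x := by
    filter_upwards [hp_pos] with x hx
    have hrp : r x * p x = pW x.1 * pA x.2 := by
      rw [hr]; field_simp
    linear_combination (-2 * m x) * hrp
  have hRHS : Integrable
      (fun x => m x ^ 2 * p x - 2 * (m x * pW x.1 * pA x.2) + r x ^ 2 * p x) (ν.prod α) :=
    (hm2.sub (hcross.const_mul 2)).add hr2'
  have hL : Integrable (fun x => (r x - m x) ^ 2 * p x) (ν.prod α) :=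
    hRHS.congr hexp.symm
  refine ⟨hL, hcross, hr2', ?_⟩
  have e1 : ∫ x, (m x ^ 2 * p x - 2 * (m x * pW x.1 * pA x.2) + r x ^ 2 * p x) ∂ν.prod α
      = (∫ x, (m x ^ 2 * p x - 2 * (m x * pW x.1 * pA x.2)) ∂ν.prod α)
        + ∫ x, r x ^ 2 * p x ∂ν.prod α :=
    integral_add (hm2.sub (hcross.const_mul 2)) hr2'
  have e2 : ∫ x, (m x ^ 2 * p x - 2 * (m x * pW x.1 * pA x.2)) ∂ν.prod α
      = (∫ x, m x ^ 2 * p x ∂ν.prod α) - ∫ x, 2 * (m x * pW x.1 * pA x.2) ∂ν.prod α :=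
    integral_sub hm2 (hcross.const_mul 2)
  rw [integral_congr_ae hexp, e1, e2, MeasureTheory.integral_const_mul]
end

section
/- In the joint-density setup for (U, W, A): assume W ⟂ A | U holds in density form, pU(u) > 0 for μ-almost every u, and pUA(u,a) > 0 for (μ⊗α)-almost every (u,a). Then for (ν⊗α)-almost every (w,a): ∫ (pU(u)/pUA(u,a)) · h(u,w,a) dμ(u) = pW(w). Equivalently, in conditional-expectation notation, p(W)/p(W,a) = E[ p(U)/p(U,a) | W, A = a ] holds p(W)-almost everywhere for every a. -/
open MeasureTheory

/-- Key ATE identity: with joint density `h` of `(U, W, A)` satisfying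
`W ⟂ A | U` in density form and positivity of `pU` and `pUA`, for `(ν⊗α)`-a.e. `(w, a)`:
`∫ (pU(u)/pUA(u,a)) · h(u,w,a) dμ(u) = pW(w)`, i.e.
`p(W)/p(W,a) = E[p(U)/p(U,a) | W, A = a]`. -/
theorem density_ratio_conversion_ate
    {U W A : Type*} [MeasurableSpace U] [MeasurableSpace W] [MeasurableSpace A]
    (μ : Measure U) (ν : Measure W) (α : Measure A)
    [SigmaFinite μ] [SigmaFinite ν] [SigmaFinite α]
    (h : U × W × A → ℝ) (h_meas : Measurable h) (h_nonneg : ∀ x, 0 ≤ h x)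
    (h_int : Integrable h (μ.prod (ν.prod α)))
    (pU : U → ℝ) (hpU : ∀ u, pU u = ∫ a, ∫ w, h (u, w, a) ∂ν ∂α)
    (pW : W → ℝ) (hpW : ∀ w, pW w = ∫ a, ∫ u, h (u, w, a) ∂μ ∂α)
    (pUW : U × W → ℝ) (hpUW : ∀ u w, pUW (u, w) = ∫ a, h (u, w, a) ∂α)
    (pUA : U × A → ℝ) (hpUA : ∀ u a, pUA (u, a) = ∫ w, h (u, w, a) ∂ν)
    (ci : ∀ᵐ x ∂μ.prod (ν.prod α), h x * pU x.1 = pUW (x.1, x.2.1) * pUA (x.1, x.2.2))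
    (hpU_pos : ∀ᵐ u ∂μ, 0 < pU u)
    (hpUA_pos : ∀ᵐ x ∂μ.prod α, 0 < pUA x) :
    ∀ᵐ x ∂ν.prod α, ∫ u, (pU u / pUA (u, x.2)) * h (u, x.1, x.2) ∂μ = pW x.1 := by
  -- move the conditional independence to the `(ν.prod α).prod μ` order
  have ci' : ∀ᵐ y ∂ν.prod α, ∀ᵐ u ∂μ,
      h (u, y.1, y.2) * pU u = pUW (u, y.1) * pUA (u, y.2) := by
    have := (Measure.measurePreserving_swap).quasiMeasurePreserving.ae ci
    exact Measure.ae_ae_of_ae_prod this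
  -- positivity of `pUA` in the right order
  have pos' : ∀ᵐ y ∂ν.prod α, ∀ᵐ u ∂μ, 0 < pUA (u, y.2) := by
    have h1 := (Measure.measurePreserving_swap).quasiMeasurePreserving.ae hpUA_pos
    have h2 : ∀ᵐ a ∂α, ∀ᵐ u ∂μ, 0 < pUA (u, a) := Measure.ae_ae_of_ae_prod h1
    exact Measure.quasiMeasurePreserving_snd.ae h2
  -- integrability of the slices `(u, a) ↦ h (u, w, a)`
  let e : (W × U × A) ≃ᵐ (U × W × A) :=
    (MeasurableEquiv.prodAssoc.symm.trans
      ((MeasurableEquiv.prodComm : W × U ≃ᵐ U × W).prodCongr (MeasurableEquiv.refl A))).trans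
      MeasurableEquiv.prodAssoc
  have he : MeasurePreserving e (ν.prod (μ.prod α)) (μ.prod (ν.prod α)) := by
    have h1 := (measurePreserving_prodAssoc ν μ α).symm MeasurableEquiv.prodAssoc
    have h2 : MeasurePreserving (Prod.map (Prod.swap : W × U → U × W) (id : A → A))
        ((ν.prod μ).prod α) ((μ.prod ν).prod α) :=
      Measure.measurePreserving_swap.prod (MeasurePreserving.id α)
    have h3 := measurePreserving_prodAssoc μ ν α
    have hcoe : ⇑e = ⇑MeasurableEquiv.prodAssoc ∘ Prod.map Prod.swap id ∘
        ⇑(MeasurableEquiv.prodAssoc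
          (α := W) (β := U) (γ := A)).symm := by
      funext z; obtain ⟨w, u, a⟩ := z; rfl
    rw [hcoe]
    exact h3.comp (h2.comp h1)
  have hg_int : Integrable (fun z : W × U × A => h (z.2.1, z.1, z.2.2))
      (ν.prod (μ.prod α)) := by
    have := (he.integrable_comp_emb e.measurableEmbedding (g := h)).2 h_int
    exact this.congr (Filter.Eventually.of_forall fun ⟨w, u, a⟩ => rfl)
  have int' : ∀ᵐ y ∂ν.prod α,
      Integrable (fun z : U × A => h (z.1, y.1, z.2)) (μ.prod α) := by
    have := hg_int.prod_right_ae
    exact Measure.quasiMeasurePreserving_fst.ae this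
  filter_upwards [ci', pos', int'] with y hci hpos hint
  have step1 : ∫ u, (pU u / pUA (u, y.2)) * h (u, y.1, y.2) ∂μ
      = ∫ u, pUW (u, y.1) ∂μ := by
    refine integral_congr_ae ?_
    filter_upwards [hci, hpos, hpU_pos] with u h1 h2 h3
    field_simp
    linarith [h1]
  have step2 : ∫ u, pUW (u, y.1) ∂μ = ∫ u, ∫ a, h (u, y.1, a) ∂α ∂μ :=
    integral_congr_ae (Filter.Eventually.of_forall fun u => hpUW u y.1)
  have step3 : ∫ u, ∫ a, h (u, y.1, a) ∂α ∂μ = ∫ a, ∫ u, h (u, y.1, a) ∂μ ∂α :=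
    integral_integral_swap hint
  rw [step1, step2, step3, hpW]
end

section
/- In the joint-density setup for (U, W, A): assume W ⟂ A | U holds in density form, pU(u) > 0 for μ-almost every u, and pUA(u,a) > 0 for (μ⊗α)-almost every (u,a). Then for (ν⊗α⊗α)-almost every (w, a, a'): ∫ (pUA(u,a')/pUA(u,a)) · h(u,w,a) dμ(u) = pWA(w,a'). Equivalently, p(W,a')/p(W,a) = E[ p(U,a')/p(U,a) | W, A = a ]. -/
/-!
Dividing the conditional-independence identity at `(u, w, a')` by the one at `(u, w, a)`
cancels `pU u` and `pUW (u, w)`, so `h (u, w, a') = pUA (u, a') / pUA (u, a) * h (u, w, a)`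
for almost every `(u, w, a, a')`. Fubini turns this into: for almost every `(w, a, a')`, the two
sides agree for almost every `u`, and integrating in `u` gives `pWA (w, a')`.
-/

open MeasureTheory Measure

theorem div_mul_eq_of_mul_eq_mul_pair {K : Type*} [Field K] {x x' p c q q' : K}
    (hp : p ≠ 0) (hq : q ≠ 0) (hx : x * p = c * q) (hx' : x' * p = c * q') :
    q' / q * x = x' := by
  have hx_eq : x = c * q / p := by rw [← hx]; field_simp
  have hx'_eq : x' = c * q' / p := by rw [← hx']; field_simp
  rw [hx_eq, hx'_eq]
  field_simp

section

variable {U W A B : Type*} [MeasurableSpace U] [MeasurableSpace W] [MeasurableSpace A]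
  [MeasurableSpace B] {μ : Measure U} {ν : Measure W} {α : Measure A} {β : Measure B}
  [SFinite μ] [SFinite ν] [SFinite α] [SFinite β]

theorem ae_ae_comp_of_ae_prod_prod {P : U × W × A → Prop}
    (hP : ∀ᵐ x ∂μ.prod (ν.prod α), P x) {g : B → A} (hg : QuasiMeasurePreserving g β α) :
    ∀ᵐ x ∂ν.prod β, ∀ᵐ u ∂μ, P (u, x.1, g x.2) := by
  have hmap : QuasiMeasurePreserving (Prod.map id (Prod.map id g) ∘ Prod.swap)
      ((ν.prod β).prod μ) (μ.prod (ν.prod α)) :=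
    (MeasureTheory.QuasiMeasurePreserving.prodMap (.id μ)
      (MeasureTheory.QuasiMeasurePreserving.prodMap (.id ν) hg)).comp
      measurePreserving_swap.quasiMeasurePreserving
  exact ae_ae_of_ae_prod (hmap.ae hP)

end

theorem density_ratio_conversion_att_general
    {U W A : Type*} [MeasurableSpace U] [MeasurableSpace W] [MeasurableSpace A]
    (μ : Measure U) (ν : Measure W) (α : Measure A)
    [SigmaFinite μ] [SigmaFinite ν] [SigmaFinite α]
    (h : U × W × A → ℝ)
    (pU : U → ℝ)
    (pUW : U × W → ℝ)
    (pUA : U × A → ℝ)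
    (pWA : W × A → ℝ) (hpWA : ∀ w a, pWA (w, a) = ∫ u, h (u, w, a) ∂μ)
    (ci : ∀ᵐ x ∂μ.prod (ν.prod α), h x * pU x.1 = pUW (x.1, x.2.1) * pUA (x.1, x.2.2))
    (hpU_pos : ∀ᵐ u ∂μ, 0 < pU u)
    (hpUA_pos : ∀ᵐ x ∂μ.prod α, 0 < pUA x) :
    ∀ᵐ x ∂ν.prod (α.prod α),
      ∫ u, (pUA (u, x.2.2) / pUA (u, x.2.1)) * h (u, x.1, x.2.1) ∂μ = pWA (x.1, x.2.2) := by
  have hpUA_pos' : ∀ᵐ x ∂μ.prod (ν.prod α), 0 < pUA (x.1, x.2.2) :=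
    (MeasureTheory.QuasiMeasurePreserving.prodMap (.id μ) quasiMeasurePreserving_snd).ae hpUA_pos
  have hcond : ∀ᵐ x ∂μ.prod (ν.prod α), h x * pU x.1 = pUW (x.1, x.2.1) * pUA (x.1, x.2.2)
      ∧ pU x.1 ≠ 0 ∧ pUA (x.1, x.2.2) ≠ 0 := by
    filter_upwards [ci, quasiMeasurePreserving_fst.ae hpU_pos, hpUA_pos'] with x hci hpU hpUA
    exact ⟨hci, hpU.ne', hpUA.ne'⟩
  filter_upwards [ae_ae_comp_of_ae_prod_prod hcond quasiMeasurePreserving_fst,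
    ae_ae_comp_of_ae_prod_prod hcond quasiMeasurePreserving_snd] with x hx hx'
  rw [hpWA]
  refine integral_congr_ae ?_
  filter_upwards [hx, hx'] with u ⟨hci, hpU, hpUA⟩ ⟨hci', _, _⟩
  exact div_mul_eq_of_mul_eq_mul_pair hpU hpUA hci hci'

/-- Key ATT identity: with joint density `h` of `(U, W, A)` satisfying
`W ⟂ A | U` in density form and positivity of `pU` and `pUA`, for `(ν⊗α⊗α)`-a.e. `(w, a, a')`:
`∫ (pUA(u,a')/pUA(u,a)) · h(u,w,a) dμ(u) = pWA(w,a')`, i.e.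
`p(W,a')/p(W,a) = E[p(U,a')/p(U,a) | W, A = a]`. -/
theorem density_ratio_conversion_att
    {U W A : Type*} [MeasurableSpace U] [MeasurableSpace W] [MeasurableSpace A]
    (μ : Measure U) (ν : Measure W) (α : Measure A)
    [SigmaFinite μ] [SigmaFinite ν] [SigmaFinite α]
    (h : U × W × A → ℝ) (h_meas : Measurable h) (h_nonneg : ∀ x, 0 ≤ h x)
    (h_int : Integrable h (μ.prod (ν.prod α)))
    (pU : U → ℝ) (hpU : ∀ u, pU u = ∫ a, ∫ w, h (u, w, a) ∂ν ∂α)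
    (pUW : U × W → ℝ) (hpUW : ∀ u w, pUW (u, w) = ∫ a, h (u, w, a) ∂α)
    (pUA : U × A → ℝ) (hpUA : ∀ u a, pUA (u, a) = ∫ w, h (u, w, a) ∂ν)
    (pWA : W × A → ℝ) (hpWA : ∀ w a, pWA (w, a) = ∫ u, h (u, w, a) ∂μ)
    (ci : ∀ᵐ x ∂μ.prod (ν.prod α), h x * pU x.1 = pUW (x.1, x.2.1) * pUA (x.1, x.2.2))
    (hpU_pos : ∀ᵐ u ∂μ, 0 < pU u)
    (hpUA_pos : ∀ᵐ x ∂μ.prod α, 0 < pUA x) :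
    ∀ᵐ x ∂ν.prod (α.prod α),
      ∫ u, (pUA (u, x.2.2) / pUA (u, x.2.1)) * h (u, x.1, x.2.1) ∂μ = pWA (x.1, x.2.2) :=
  density_ratio_conversion_att_general μ ν α h pU pUW pUA pWA hpWA ci hpU_pos hpUA_pos
end

section
/- In the conditional joint-density setup for (U, W, Z) given A = a: assume (i) W ⟂ Z | U holds in density form, i.e. f(u,w,z)·fU(u) = fUW(u,w)·fUZ(u,z) almost everywhere; (ii) fU(u) > 0 for μ-almost every u; and (iii) completeness: for every measurable g : U → ℝ such that g·fU is μ-integrable, if ∫ g(u) fUZ(u,z) dμ(u) = 0 for ρ-almost every z, then g(u)·fU(u) = 0 for μ-almost every u. Then for every bounded measurable ℓ : W → ℝ: if ∫∫ ℓ(w) f(u,w,z) dμ(u) dν(w) = 0 for ρ-almost every z, then ∫ ℓ(w) fUW(u,w) dν(w) = 0 for μ-almost every u. -/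
/-!
With `h u = ∫ ℓ(w) fUW(u,w) dν(w)` and `g = h / fU`, conditional independence factors
`f(u,w,z) = fUW(u,w) fUZ(u,z) / fU(u)`, so `∫ ℓ(w) f(u,w,z) dν(w) = g(u) fUZ(u,z)`.
Integrating in `u` and swapping the order of integration turns the hypothesis on `ℓ` into
`∫ g(u) fUZ(u,z) dμ(u) = 0` for a.e. `z`, and completeness gives `h = g fU = 0` a.e.
Fubini also identifies `h(u)` with `∫ ℓ(w) f(u,w,z) d(ν ⊗ ρ)`, which makes `g fU`
integrable.
-/

open MeasureTheory

namespace MeasureTheory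

variable {U W Z : Type*} [MeasurableSpace U] [MeasurableSpace W] [MeasurableSpace Z]
  {μ : Measure U} {ν : Measure W} {ρ : Measure Z} [SFinite μ] [SFinite ν] [SFinite ρ]

theorem ae_ae_ae_of_ae_prod_prod {p : U × W × Z → Prop}
    (h : ∀ᵐ x ∂μ.prod (ν.prod ρ), p x) :
    ∀ᵐ z ∂ρ, ∀ᵐ u ∂μ, ∀ᵐ w ∂ν, p (u, w, z) := by
  have rotate : MeasurePreserving (fun x : (Z × U) × W => (x.1.2, x.2, x.1.1))
      ((ρ.prod μ).prod ν) (μ.prod (ν.prod ρ)) :=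
    ((MeasurePreserving.id μ).prod Measure.measurePreserving_swap).comp
      ((measurePreserving_prodAssoc μ ρ ν).comp
        (Measure.measurePreserving_swap.prod (MeasurePreserving.id ν)))
  exact Measure.ae_ae_of_ae_prod (Measure.ae_ae_of_ae_prod (rotate.quasiMeasurePreserving.ae h))

theorem Integrable.ae_integrable_prod_slice {E : Type*} [NormedAddCommGroup E]
    {F : U × W × Z → E} (hF : Integrable F (μ.prod (ν.prod ρ))) :
    ∀ᵐ z ∂ρ, Integrable (fun p : U × W => F (p.1, p.2, z)) (μ.prod ν) :=
  ((measurePreserving_prodAssoc μ ν ρ).integrable_comp_emb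
    MeasurableEquiv.prodAssoc.measurableEmbedding |>.mpr hF).prod_left_ae

theorem StronglyMeasurable.integral_integral_right {E : Type*} [NormedAddCommGroup E]
    [NormedSpace ℝ E] {f : U × W × Z → E} (hf : StronglyMeasurable f) :
    StronglyMeasurable fun u => ∫ z, ∫ w, f (u, w, z) ∂ν ∂ρ := by
  have inner : StronglyMeasurable fun q : U × Z => ∫ w, f (q.1, w, q.2) ∂ν :=
    (hf.comp_measurable (by fun_prop) : StronglyMeasurable
      fun x : (U × Z) × W => f (x.1.1, x.2, x.1.2)).integral_prod_right'
  exact inner.integral_prod_right'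

theorem integral_prod_comp_fst_mul {ℓ : W → ℝ} {g : W × Z → ℝ}
    (hg : Integrable (fun p => ℓ p.1 * g p) (ν.prod ρ)) :
    ∫ p, ℓ p.1 * g p ∂ν.prod ρ = ∫ w, ℓ w * ∫ z, g (w, z) ∂ρ ∂ν := by
  simp_rw [integral_prod _ hg, integral_const_mul]

end MeasureTheory

theorem integral_mul_eq_div_mul_of_ae {W : Type*} [MeasurableSpace W] {ν : Measure W}
    {ℓ a b : W → ℝ} {c d : ℝ} (hc : c ≠ 0) (h : ∀ᵐ w ∂ν, a w * c = b w * d) :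
    ∫ w, ℓ w * a w ∂ν = (∫ w, ℓ w * b w ∂ν) / c * d := by
  have ha : ∀ᵐ w ∂ν, ℓ w * a w = ℓ w * b w * (d / c) := h.mono fun w hw => by
    rw [← mul_div_assoc, eq_div_iff hc]
    linear_combination ℓ w * hw
  rw [integral_congr_ae ha, integral_mul_const]
  ring

theorem null_space_subset_lemma_general
    {U W Z : Type*} [MeasurableSpace U] [MeasurableSpace W] [MeasurableSpace Z]
    (μ : Measure U) (ν : Measure W) (ρ : Measure Z)
    [SigmaFinite μ] [SigmaFinite ν] [SigmaFinite ρ]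
    (f : U × W × Z → ℝ) (f_meas : Measurable f)
    (f_int : Integrable f (μ.prod (ν.prod ρ)))
    (fU : U → ℝ) (hfU : ∀ u, fU u = ∫ z, ∫ w, f (u, w, z) ∂ν ∂ρ)
    (fUW : U × W → ℝ) (hfUW : ∀ u w, fUW (u, w) = ∫ z, f (u, w, z) ∂ρ)
    (fUZ : U × Z → ℝ)
    (ci : ∀ᵐ x ∂μ.prod (ν.prod ρ), f x * fU x.1 = fUW (x.1, x.2.1) * fUZ (x.1, x.2.2))
    (hfU_pos : ∀ᵐ u ∂μ, 0 < fU u)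
    (compl : ∀ g : U → ℝ, Measurable g → Integrable (fun u => g u * fU u) μ →
      (∀ᵐ z ∂ρ, ∫ u, g u * fUZ (u, z) ∂μ = 0) → ∀ᵐ u ∂μ, g u * fU u = 0) :
    ∀ ℓ : W → ℝ, Measurable ℓ → (∃ C, ∀ w, |ℓ w| ≤ C) →
      (∀ᵐ z ∂ρ, ∫ w, ∫ u, ℓ w * f (u, w, z) ∂μ ∂ν = 0) →
      ∀ᵐ u ∂μ, ∫ w, ℓ w * fUW (u, w) ∂ν = 0 := by
  rintro ℓ hℓ ⟨C, hC⟩ h_null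
  have hF_meas : Measurable fun x : U × W × Z => ℓ x.2.1 * f x := by fun_prop
  have hF_int : Integrable (fun x : U × W × Z => ℓ x.2.1 * f x) (μ.prod (ν.prod ρ)) :=
    f_int.bdd_mul (hℓ.comp (by fun_prop)).aestronglyMeasurable (c := C)
      (ae_of_all _ fun x => hC x.2.1)
  set H : U → ℝ := fun u => ∫ p, ℓ p.1 * f (u, p) ∂ν.prod ρ
  have hH : ∀ᵐ u ∂μ, ∫ w, ℓ w * fUW (u, w) ∂ν = H u := by
    filter_upwards [hF_int.prod_right_ae] with u hu
    simp_rw [hfUW]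
    exact (integral_prod_comp_fst_mul hu).symm
  have hg_meas : Measurable fun u => H u / fU u := by
    have hfU_meas : Measurable fU := by
      rw [funext hfU]
      exact f_meas.stronglyMeasurable.integral_integral_right.measurable
    exact hF_meas.stronglyMeasurable.integral_prod_right'.measurable.div hfU_meas
  have hgfU : ∀ᵐ u ∂μ, H u / fU u * fU u = H u :=
    hfU_pos.mono fun u hu => div_mul_cancel₀ _ hu.ne'
  have h_slice : ∀ᵐ z ∂ρ, ∀ᵐ u ∂μ,
      ∫ w, ℓ w * f (u, w, z) ∂ν = H u / fU u * fUZ (u, z) := by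
    filter_upwards [ae_ae_ae_of_ae_prod_prod ci] with z hz
    filter_upwards [hz, hH, hfU_pos] with u hci hHu hpos
    rw [← hHu]
    exact integral_mul_eq_div_mul_of_ae hpos.ne' hci
  have h_moment : ∀ᵐ z ∂ρ, ∫ u, H u / fU u * fUZ (u, z) ∂μ = 0 := by
    filter_upwards [h_null, h_slice, hF_int.ae_integrable_prod_slice] with z hz hslice hint
    rw [← integral_congr_ae hslice, integral_integral_swap hint, hz]
  have hg_int : Integrable (fun u => H u / fU u * fU u) μ :=
    hF_int.integral_prod_left.congr (hgfU.mono fun _ h => h.symm)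
  filter_upwards [compl _ hg_meas hg_int h_moment, hgfU, hH] with u h0 hgu hHu
  rw [hHu, ← hgu, h0]

/-- Null-space lemma: in the conditional joint-density setup for `(U, W, Z)`
given `A = a`, under `W ⟂ Z | U` (density form), positivity of `fU`, and completeness of
`fUZ`, every bounded measurable `ℓ : W → ℝ` with `E[ℓ(W) | Z = z, A = a] = 0` for a.e. `z`
(expressed as `∫∫ ℓ f dμ dν = 0` for ρ-a.e. `z`) satisfies `E[ℓ(W) | U = u, A = a] = 0`
(expressed as `∫ ℓ(w) fUW(u,w) dν(w) = 0`) for μ-a.e. `u`. -/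
theorem null_space_subset_lemma
    {U W Z : Type*} [MeasurableSpace U] [MeasurableSpace W] [MeasurableSpace Z]
    (μ : Measure U) (ν : Measure W) (ρ : Measure Z)
    [SigmaFinite μ] [SigmaFinite ν] [SigmaFinite ρ]
    (f : U × W × Z → ℝ) (f_meas : Measurable f) (f_nonneg : ∀ x, 0 ≤ f x)
    (f_int : Integrable f (μ.prod (ν.prod ρ)))
    (fU : U → ℝ) (hfU : ∀ u, fU u = ∫ z, ∫ w, f (u, w, z) ∂ν ∂ρ)
    (fUW : U × W → ℝ) (hfUW : ∀ u w, fUW (u, w) = ∫ z, f (u, w, z) ∂ρ)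
    (fUZ : U × Z → ℝ) (hfUZ : ∀ u z, fUZ (u, z) = ∫ w, f (u, w, z) ∂ν)
    (ci : ∀ᵐ x ∂μ.prod (ν.prod ρ), f x * fU x.1 = fUW (x.1, x.2.1) * fUZ (x.1, x.2.2))
    (hfU_pos : ∀ᵐ u ∂μ, 0 < fU u)
    (compl : ∀ g : U → ℝ, Measurable g → Integrable (fun u => g u * fU u) μ →
      (∀ᵐ z ∂ρ, ∫ u, g u * fUZ (u, z) ∂μ = 0) → ∀ᵐ u ∂μ, g u * fU u = 0) :
    ∀ ℓ : W → ℝ, Measurable ℓ → (∃ C, ∀ w, |ℓ w| ≤ C) →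
      (∀ᵐ z ∂ρ, ∫ w, ∫ u, ℓ w * f (u, w, z) ∂μ ∂ν = 0) →
      ∀ᵐ u ∂μ, ∫ w, ℓ w * fUW (u, w) ∂ν = 0 :=
  null_space_subset_lemma_general μ ν ρ f f_meas f_int fU hfU fUW hfUW fUZ ci hfU_pos compl
end

section
/- In the joint-density setup for (U, W, A): assume W ⟂ A | U holds in density form, pU(u) > 0 for μ-almost every u, pUA(u,a) > 0 for (μ⊗α)-almost every (u,a), pWA(w,a) > 0 for (ν⊗α)-almost every (w,a), and pA(a) > 0 for α-almost every a. Then for (α⊗α)-almost every (a, a') the following holds: for every bounded measurable ℓ : W → ℝ such that ∫ ℓ(w) h(u,w,a) dν(w) = 0 for μ-almost every u (i.e. E[ℓ(W) | U, A = a] = 0), one has ∫ ℓ(w) · r_{a,a'}(w) · pWA(w,a) dν(w) = 0, where r_{a,a'}(w) = pWA(w,a')·pA(a)/(pWA(w,a)·pA(a')). That is, the ATT density ratio r_{a,a'} is orthogonal in L²(p_{W|A=a}) to every such ℓ. -/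
/-!
Fix `u`. Conditional independence says that `w ↦ h (u, w, a)` is proportional to `pUW (u, ·)`,
with the factor `pUA (u, a) / pU u`, which is nonzero. Hence `∫ ℓ · h (u, ·, a) dν = 0` forces
`∫ ℓ · pUW (u, ·) dν = 0` and so `∫ ℓ · h (u, ·, a') dν = 0` for every other treatment level `a'`.
Integrating over `u` (Fubini) gives `∫ ℓ · pWA (·, a') dν = 0`. Finally, wherever
`pWA (w, a) ≠ 0`, the integrand `ℓ · r_{a,a'} · pWA (·, a)` equals the constant
`pA a / pA a'` times `ℓ · pWA (·, a')`.
-/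

open MeasureTheory

namespace MeasureTheory

variable {α β γ : Type*} [MeasurableSpace α] [MeasurableSpace β] [MeasurableSpace γ]
  {μ : Measure α} {ν : Measure β} {τ : Measure γ}

theorem Measure.ae_ae_swap_of_ae_prod [SFinite μ] [SFinite ν] {p : α × β → Prop}
    (h : ∀ᵐ z ∂μ.prod ν, p z) : ∀ᵐ y ∂ν, ∀ᵐ x ∂μ, p (x, y) :=
  Measure.ae_ae_of_ae_prod (Measure.measurePreserving_swap.quasiMeasurePreserving.ae h)

theorem Measure.ae_ae_ae_of_ae_prod_prod [SFinite μ] [SFinite ν] [SFinite τ]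
    {p : α × β × γ → Prop} (h : ∀ᵐ z ∂μ.prod (ν.prod τ), p z) :
    ∀ᵐ c ∂τ, ∀ᵐ a ∂μ, ∀ᵐ b ∂ν, p (a, b, c) :=
  (Measure.ae_ae_swap_of_ae_prod
    ((measurePreserving_prodAssoc μ ν τ).quasiMeasurePreserving.ae h)).mono
    fun _ hc => Measure.ae_ae_of_ae_prod hc

theorem Integrable.prod_prod_left_ae {E : Type*} [NormedAddCommGroup E] [SFinite μ] [SFinite ν]
    [SFinite τ] {f : α × β × γ → E} (hf : Integrable f (μ.prod (ν.prod τ))) :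
    ∀ᵐ c ∂τ, Integrable (fun y : α × β => f (y.1, y.2, c)) (μ.prod ν) :=
  (((measurePreserving_prodAssoc μ ν τ).integrable_comp_emb
    MeasurableEquiv.prodAssoc.measurableEmbedding).2 hf).prod_left_ae

theorem integral_integral_swap_eq_zero {E : Type*} [NormedAddCommGroup E] [NormedSpace ℝ E]
    [SFinite μ] [SFinite ν] {f : α → β → E} (hf : Integrable (Function.uncurry f) (μ.prod ν))
    (h0 : ∀ᵐ x ∂μ, ∫ y, f x y ∂ν = 0) : ∫ y, ∫ x, f x y ∂μ ∂ν = 0 := by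
  rw [← integral_integral_swap hf]
  exact integral_eq_zero_of_ae h0

theorem integral_eq_zero_of_mul_eq_mul {f g k : β → ℝ} {p q r : ℝ} (hp : p ≠ 0) (hq : q ≠ 0)
    (hf : ∀ᵐ y ∂ν, f y * p = g y * q) (hk : ∀ᵐ y ∂ν, k y * p = g y * r)
    (h0 : ∫ y, f y ∂ν = 0) : ∫ y, k y ∂ν = 0 := by
  have hg : (∫ y, g y ∂ν) * q = 0 := by
    rw [← integral_mul_const, ← integral_congr_ae hf, integral_mul_const, h0, zero_mul]
  have hk' : (∫ y, k y ∂ν) * p = 0 := by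
    rw [← integral_mul_const, integral_congr_ae hk, integral_mul_const,
      (mul_eq_zero.1 hg).resolve_right hq, zero_mul]
  exact (mul_eq_zero.1 hk').resolve_right hp

theorem ae_integral_mul_eq_zero_of_factorization {f g k : α → β → ℝ} {p q r : α → ℝ}
    (hp : ∀ᵐ x ∂μ, p x ≠ 0) (hq : ∀ᵐ x ∂μ, q x ≠ 0)
    (hf : ∀ᵐ x ∂μ, ∀ᵐ y ∂ν, f x y * p x = g x y * q x)
    (hk : ∀ᵐ x ∂μ, ∀ᵐ y ∂ν, k x y * p x = g x y * r x) (ℓ : β → ℝ)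
    (h0 : ∀ᵐ x ∂μ, ∫ y, ℓ y * f x y ∂ν = 0) : ∀ᵐ x ∂μ, ∫ y, ℓ y * k x y ∂ν = 0 := by
  filter_upwards [hp, hq, hf, hk, h0] with x hpx hqx hfx hkx h0x
  refine integral_eq_zero_of_mul_eq_mul (g := fun y => ℓ y * g x y) (r := r x) hpx hqx ?_ ?_ h0x
  · filter_upwards [hfx] with y hy
    rw [mul_assoc, hy, mul_assoc]
  · filter_upwards [hkx] with y hy
    rw [mul_assoc, hy, mul_assoc]

end MeasureTheory

theorem att_density_ratio_orthogonal_general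
    {U W A : Type*} [MeasurableSpace U] [MeasurableSpace W] [MeasurableSpace A]
    (μ : Measure U) (ν : Measure W) (α : Measure A)
    [SigmaFinite μ] [SigmaFinite ν] [SigmaFinite α]
    (h : U × W × A → ℝ) (h_int : Integrable h (μ.prod (ν.prod α)))
    (pU : U → ℝ) (pA : A → ℝ) (pUW : U × W → ℝ) (pUA : U × A → ℝ)
    (pWA : W × A → ℝ) (hpWA : ∀ w a, pWA (w, a) = ∫ u, h (u, w, a) ∂μ)
    (ci : ∀ᵐ x ∂μ.prod (ν.prod α), h x * pU x.1 = pUW (x.1, x.2.1) * pUA (x.1, x.2.2))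
    (hpU_pos : ∀ᵐ u ∂μ, 0 < pU u)
    (hpUA_pos : ∀ᵐ x ∂μ.prod α, 0 < pUA x)
    (hpWA_pos : ∀ᵐ x ∂ν.prod α, 0 < pWA x) :
    ∀ᵐ x ∂α.prod α, ∀ ℓ : W → ℝ, Measurable ℓ → (∃ C, ∀ w, |ℓ w| ≤ C) →
      (∀ᵐ u ∂μ, ∫ w, ℓ w * h (u, w, x.1) ∂ν = 0) →
      ∫ w, ℓ w * (pWA (w, x.2) * pA x.1 / (pWA (w, x.1) * pA x.2)) * pWA (w, x.1) ∂ν = 0 := by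
  have hgood : ∀ᵐ a ∂α, Integrable (fun y : U × W => h (y.1, y.2, a)) (μ.prod ν) ∧
      (∀ᵐ u ∂μ, ∀ᵐ w ∂ν, h (u, w, a) * pU u = pUW (u, w) * pUA (u, a)) ∧
      (∀ᵐ u ∂μ, 0 < pUA (u, a)) ∧ ∀ᵐ w ∂ν, 0 < pWA (w, a) := by
    filter_upwards [h_int.prod_prod_left_ae, Measure.ae_ae_ae_of_ae_prod_prod ci,
      Measure.ae_ae_swap_of_ae_prod hpUA_pos, Measure.ae_ae_swap_of_ae_prod hpWA_pos]
      with a h₁ h₂ h₃ h₄ using ⟨h₁, h₂, h₃, h₄⟩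
  filter_upwards [Measure.quasiMeasurePreserving_fst.ae hgood,
    Measure.quasiMeasurePreserving_snd.ae hgood] with ⟨a, a'⟩ hgood_a hgood_a'
  obtain ⟨-, ci_a, hpUA_a, hpWA_a⟩ := hgood_a
  obtain ⟨hint_a', ci_a', -, -⟩ := hgood_a'
  rintro ℓ hℓ ⟨C, hC⟩ hzero
  have hzero' : ∀ᵐ u ∂μ, ∫ w, ℓ w * h (u, w, a') ∂ν = 0 :=
    ae_integral_mul_eq_zero_of_factorization (hpU_pos.mono fun _ => ne_of_gt)
      (hpUA_a.mono fun _ => ne_of_gt) ci_a ci_a' ℓ hzero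
  have hmarg : ∫ w, ℓ w * pWA (w, a') ∂ν = 0 := by
    simp_rw [hpWA, ← integral_const_mul]
    refine integral_integral_swap_eq_zero ?_ hzero'
    exact hint_a'.bdd_mul (hℓ.comp measurable_snd).aestronglyMeasurable
      (Filter.Eventually.of_forall fun y => (Real.norm_eq_abs _).trans_le (hC y.2))
  calc ∫ w, ℓ w * (pWA (w, a') * pA a / (pWA (w, a) * pA a')) * pWA (w, a) ∂ν
      = ∫ w, pA a / pA a' * (ℓ w * pWA (w, a')) ∂ν := by
        refine integral_congr_ae ?_
        filter_upwards [hpWA_a] with w hw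
        rw [mul_div_mul_comm]
        field_simp
    _ = 0 := by rw [integral_const_mul, hmarg, mul_zero]

/-- The ATT density ratio `r_{a,a'}(w) = pWA(w,a')·pA(a)/(pWA(w,a)·pA(a'))` is
orthogonal in `L²(p_{W|A=a})` to every bounded measurable `ℓ` with `E[ℓ(W) | U, A = a] = 0`,
for `(α⊗α)`-a.e. `(a, a')`, in the joint-density setup for `(U, W, A)` with `W ⟂ A | U` and
positivity of the involved densities. -/
theorem att_density_ratio_orthogonal
    {U W A : Type*} [MeasurableSpace U] [MeasurableSpace W] [MeasurableSpace A]
    (μ : Measure U) (ν : Measure W) (α : Measure A)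
    [SigmaFinite μ] [SigmaFinite ν] [SigmaFinite α]
    (h : U × W × A → ℝ) (h_meas : Measurable h) (h_nonneg : ∀ x, 0 ≤ h x)
    (h_int : Integrable h (μ.prod (ν.prod α)))
    (pU : U → ℝ) (hpU : ∀ u, pU u = ∫ a, ∫ w, h (u, w, a) ∂ν ∂α)
    (pA : A → ℝ) (hpA : ∀ a, pA a = ∫ w, ∫ u, h (u, w, a) ∂μ ∂ν)
    (pUW : U × W → ℝ) (hpUW : ∀ u w, pUW (u, w) = ∫ a, h (u, w, a) ∂α)
    (pUA : U × A → ℝ) (hpUA : ∀ u a, pUA (u, a) = ∫ w, h (u, w, a) ∂ν)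
    (pWA : W × A → ℝ) (hpWA : ∀ w a, pWA (w, a) = ∫ u, h (u, w, a) ∂μ)
    (ci : ∀ᵐ x ∂μ.prod (ν.prod α), h x * pU x.1 = pUW (x.1, x.2.1) * pUA (x.1, x.2.2))
    (hpU_pos : ∀ᵐ u ∂μ, 0 < pU u)
    (hpUA_pos : ∀ᵐ x ∂μ.prod α, 0 < pUA x)
    (hpWA_pos : ∀ᵐ x ∂ν.prod α, 0 < pWA x)
    (hpA_pos : ∀ᵐ a ∂α, 0 < pA a) :
    ∀ᵐ x ∂α.prod α, ∀ ℓ : W → ℝ, Measurable ℓ → (∃ C, ∀ w, |ℓ w| ≤ C) →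
      (∀ᵐ u ∂μ, ∫ w, ℓ w * h (u, w, x.1) ∂ν = 0) →
      ∫ w, ℓ w * (pWA (w, x.2) * pA x.1 / (pWA (w, x.1) * pA x.2)) * pWA (w, x.1) ∂ν = 0 :=
  att_density_ratio_orthogonal_general μ ν α h h_int pU pA pUW pUA pWA hpWA ci hpU_pos hpUA_pos
    hpWA_pos
end

section
/- In the conditional joint-density setup for (U, W, Z) given A = a, let additionally pU : U → [0,∞) be μ-integrable and pW : W → [0,∞) measurable with pW(w) = ∫ pU(u)·(fUW(u,w)/fU(u)) dμ(u) for ν-almost every w. Assume: (i) W ⟂ Z | U in density form: f(u,w,z)·fU(u) = fUW(u,w)·fUZ(u,z) almost everywhere; (ii) fU(u) > 0 for μ-almost every u; (iii) completeness: for every measurable g : U → ℝ with g·fU μ-integrable, if ∫ g(u) fUW(u,w) dμ(u) = 0 for ν-almost every w, then g·fU = 0 μ-almost everywhere; (iv) φ : Z → ℝ is bounded measurable and satisfies the W-level bridge equation ∫∫ φ(z) f(u,w,z) dμ(u) dρ(z) = pW(w) for ν-almost every w. Then φ satisfies the U-level bridge equation: ∫ φ(z) fUZ(u,z) dρ(z)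 = pU(u) for μ-almost every u. -/
open MeasureTheory

/-- Completeness step of the dose-response identification: in the conditional
joint-density setup for `(U, W, Z)` given `A = a`, with `pW(w) = ∫ pU(u)·fUW(u,w)/fU(u) dμ(u)`,
`W ⟂ Z | U` in density form, `fU > 0` a.e., and completeness of `fUW`, any bounded measurable
`φ` satisfying the W-level bridge equation `∫∫ φ(z) f(u,w,z) dμ(u) dρ(z) = pW(w)` (ν-a.e. `w`)
satisfies the U-level bridge equation `∫ φ(z) fUZ(u,z) dρ(z) = pU(u)` (μ-a.e. `u`). -/
theorem bridge_equation_lift_to_confounder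
    {U W Z : Type*} [MeasurableSpace U] [MeasurableSpace W] [MeasurableSpace Z]
    (μ : Measure U) (ν : Measure W) (ρ : Measure Z)
    [SigmaFinite μ] [SigmaFinite ν] [SigmaFinite ρ]
    (f : U × W × Z → ℝ) (f_meas : Measurable f) (f_nonneg : ∀ x, 0 ≤ f x)
    (f_int : Integrable f (μ.prod (ν.prod ρ)))
    (fU : U → ℝ) (hfU : ∀ u, fU u = ∫ z, ∫ w, f (u, w, z) ∂ν ∂ρ)
    (fUW : U × W → ℝ) (hfUW : ∀ u w, fUW (u, w) = ∫ z, f (u, w, z) ∂ρ)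
    (fUZ : U × Z → ℝ) (hfUZ : ∀ u z, fUZ (u, z) = ∫ w, f (u, w, z) ∂ν)
    (pU : U → ℝ) (hpU_nonneg : ∀ u, 0 ≤ pU u) (hpU_int : Integrable pU μ)
    (pW : W → ℝ) (hpW_nonneg : ∀ w, 0 ≤ pW w) (hpW_meas : Measurable pW)
    (hpW : ∀ᵐ w ∂ν, pW w = ∫ u, pU u * (fUW (u, w) / fU u) ∂μ)
    (ci : ∀ᵐ x ∂μ.prod (ν.prod ρ), f x * fU x.1 = fUW (x.1, x.2.1) * fUZ (x.1, x.2.2))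
    (hfU_pos : ∀ᵐ u ∂μ, 0 < fU u)
    (compl : ∀ g : U → ℝ, Measurable g → Integrable (fun u => g u * fU u) μ →
      (∀ᵐ w ∂ν, ∫ u, g u * fUW (u, w) ∂μ = 0) → ∀ᵐ u ∂μ, g u * fU u = 0)
    (φ : Z → ℝ) (hφ_meas : Measurable φ) (hφ_bdd : ∃ C, ∀ z, |φ z| ≤ C)
    (bridge : ∀ᵐ w ∂ν, ∫ z, ∫ u, φ z * f (u, w, z) ∂μ ∂ρ = pW w) :
    ∀ᵐ u ∂μ, ∫ z, φ z * fUZ (u, z) ∂ρ = pU u := by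
  classical
  obtain ⟨C₀, hC₀⟩ := hφ_bdd
  set C : ℝ := max C₀ 0 with hCdef
  have hC : ∀ z, |φ z| ≤ C := fun z => le_max_of_le_left (hC₀ z)
  -- measurability of the marginal densities
  have fUZ_meas : Measurable fUZ := by
    have h : Measurable fun q : (U × Z) × W => f (q.1.1, q.2, q.1.2) :=
      f_meas.comp (measurable_fst.fst.prodMk (measurable_snd.prodMk measurable_fst.snd))
    have h2 := (h.stronglyMeasurable.integral_prod_right' (ν := ν)).measurable
    have : fUZ = fun p : U × Z => ∫ w, f (p.1, w, p.2) ∂ν := funext fun p => hfUZ p.1 p.2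
    rw [this]; exact h2
  have fUW_meas : Measurable fUW := by
    have h : Measurable fun q : (U × W) × Z => f (q.1.1, q.1.2, q.2) :=
      f_meas.comp (measurable_fst.fst.prodMk (measurable_fst.snd.prodMk measurable_snd))
    have h2 := (h.stronglyMeasurable.integral_prod_right' (ν := ρ)).measurable
    have : fUW = fun p : U × W => ∫ z, f (p.1, p.2, z) ∂ρ := funext fun p => hfUW p.1 p.2
    rw [this]; exact h2
  have hfU_eq : ∀ u, fU u = ∫ z, fUZ (u, z) ∂ρ := fun u => by simp only [hfU, hfUZ]
  have fU_meas : Measurable fU := by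
    have h2 := (fUZ_meas.stronglyMeasurable.integral_prod_right' (ν := ρ)).measurable
    have : fU = fun u => ∫ z, fUZ (u, z) ∂ρ := funext hfU_eq
    rw [this]; exact h2
  have fUZ_nonneg : ∀ p : U × Z, 0 ≤ fUZ p := fun p => by
    rw [show fUZ p = ∫ w, f (p.1, w, p.2) ∂ν from hfUZ p.1 p.2]
    exact integral_nonneg fun w => f_nonneg _
  -- measurable representative of pU
  obtain ⟨pU', pU'_meas, pU'_ae⟩ := hpU_int.aestronglyMeasurable.aemeasurable
  -- the candidate function H
  set H : U → ℝ := fun u => ∫ z, φ z * fUZ (u, z) ∂ρ with hH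
  have H_meas : Measurable H := by
    have h : Measurable fun p : U × Z => φ p.2 * fUZ p :=
      (hφ_meas.comp measurable_snd).mul fUZ_meas
    exact (h.stronglyMeasurable.integral_prod_right' (ν := ρ)).measurable
  -- slice integrability facts from Fubini on f
  have hfu_slice : ∀ᵐ u ∂μ, Integrable (fun p : W × Z => f (u, p.1, p.2)) (ν.prod ρ) :=
    f_int.prod_right_ae
  have hfUZ_slice_int : ∀ᵐ u ∂μ, Integrable (fun z => fUZ (u, z)) ρ := by
    filter_upwards [hfu_slice] with u hu
    have h := hu.integral_prod_right
    simpa only [hfUZ] using h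
  -- fU is integrable
  have fU_int : Integrable fU μ := by
    refine f_int.integral_prod_left.congr ?_
    filter_upwards [hfu_slice] with u hu
    calc ∫ p, f (u, p) ∂(ν.prod ρ) = ∫ w, ∫ z, f (u, w, z) ∂ρ ∂ν := integral_prod _ hu
      _ = ∫ z, ∫ w, f (u, w, z) ∂ν ∂ρ := integral_integral_swap hu
      _ = fU u := (hfU u).symm
  -- H is integrable (bounded by C * fU)
  have H_int : Integrable H μ := by
    refine (fU_int.const_mul C).mono' H_meas.aestronglyMeasurable ?_
    filter_upwards [hfUZ_slice_int] with u hu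
    rw [Real.norm_eq_abs]
    calc |H u| ≤ ∫ z, |φ z| * |fUZ (u, z)| ∂ρ := by
          simpa [Real.norm_eq_abs, abs_mul] using
            norm_integral_le_integral_norm (μ := ρ) (fun z => φ z * fUZ (u, z))
      _ ≤ ∫ z, C * fUZ (u, z) ∂ρ := by
          refine integral_mono_of_nonneg
            (Filter.Eventually.of_forall fun z => mul_nonneg (abs_nonneg _) (abs_nonneg _))
            (hu.const_mul C) (Filter.Eventually.of_forall fun z => ?_)
          show |φ z| * |fUZ (u, z)| ≤ C * fUZ (u, z)
          rw [abs_of_nonneg (fUZ_nonneg (u, z))]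
          exact mul_le_mul_of_nonneg_right (hC z) (fUZ_nonneg (u, z))
      _ = C * fU u := by rw [integral_const_mul, ← hfU_eq]
  -- the test function g for completeness
  set g : U → ℝ := fun u => (H u - pU' u) / fU u with hg
  have g_meas : Measurable g := (H_meas.sub pU'_meas).div fU_meas
  have g_mul_fU : ∀ᵐ u ∂μ, g u * fU u = H u - pU' u := by
    filter_upwards [hfU_pos] with u hu
    exact div_mul_cancel₀ _ hu.ne'
  have g_fU_int : Integrable (fun u => g u * fU u) μ :=
    (H_int.sub (hpU_int.congr pU'_ae)).congr (g_mul_fU.mono fun u h => h.symm)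
  -- rearrangement: transport f_int and ci to the measure ν.prod (μ.prod ρ)
  have hPe : MeasurePreserving (fun q : W × U × Z => (q.2.1, (q.1, q.2.2)))
      (ν.prod (μ.prod ρ)) (μ.prod (ν.prod ρ)) := by
    have h1 : MeasurePreserving (fun q : W × U × Z => ((q.1, q.2.1), q.2.2))
        (ν.prod (μ.prod ρ)) ((ν.prod μ).prod ρ) :=
      (measurePreserving_prodAssoc ν μ ρ).symm MeasurableEquiv.prodAssoc
    have h2 : MeasurePreserving (fun q : (W × U) × Z => ((q.1.2, q.1.1), q.2))
        ((ν.prod μ).prod ρ) ((μ.prod ν).prod ρ) :=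
      (Measure.measurePreserving_swap (μ := ν) (ν := μ)).prod (MeasurePreserving.id ρ)
    have h3 := measurePreserving_prodAssoc μ ν ρ
    exact (h3.comp h2).comp h1
  have hF'_int : Integrable (fun q : W × U × Z => f (q.2.1, q.1, q.2.2)) (ν.prod (μ.prod ρ)) :=
    (hPe.integrable_comp f_int.aestronglyMeasurable).2 f_int
  have ci' : ∀ᵐ q ∂ν.prod (μ.prod ρ),
      f (q.2.1, q.1, q.2.2) * fU q.2.1 = fUW (q.2.1, q.1) * fUZ (q.2.1, q.2.2) :=
    hPe.quasiMeasurePreserving.ae ci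
  have ciW : ∀ᵐ w ∂ν, ∀ᵐ p ∂μ.prod ρ,
      f (p.1, w, p.2) * fU p.1 = fUW (p.1, w) * fUZ (p.1, p.2) := Measure.ae_ae_of_ae_prod ci'
  have hFw_int : ∀ᵐ w ∂ν, Integrable (fun p : U × Z => f (p.1, w, p.2)) (μ.prod ρ) :=
    hF'_int.prod_right_ae
  -- key step: the completeness hypothesis applies to g
  have hkey : ∀ᵐ w ∂ν, ∫ u, g u * fUW (u, w) ∂μ = 0 := by
    filter_upwards [bridge, hpW, hFw_int, ciW] with w hbridge hpw hFw hci
    set G1 : U → ℝ := fun u => ∫ z, φ z * f (u, w, z) ∂ρ with hG1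
    set G2 : U → ℝ := fun u => pU' u * (fUW (u, w) / fU u) with hG2
    have hci2 : ∀ᵐ u ∂μ, ∀ᵐ z ∂ρ, f (u, w, z) * fU u = fUW (u, w) * fUZ (u, z) :=
      Measure.ae_ae_of_ae_prod hci
    -- the integrand φ z * f (u, w, z) is integrable on the product
    have hφf_int : Integrable (fun p : U × Z => φ p.2 * f (p.1, w, p.2)) (μ.prod ρ) := by
      refine (hFw.const_mul C).mono'
        (((hφ_meas.comp measurable_snd).mul
          (f_meas.comp (measurable_fst.prodMk
            (measurable_const.prodMk measurable_snd)))).aestronglyMeasurable) ?_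
      refine Filter.Eventually.of_forall fun p => ?_
      rw [Real.norm_eq_abs, abs_mul, abs_of_nonneg (f_nonneg _)]
      exact mul_le_mul_of_nonneg_right (hC p.2) (f_nonneg _)
    have G1_int : Integrable G1 μ := hφf_int.integral_prod_left
    have hG1_val : ∫ u, G1 u ∂μ = pW w := (integral_integral_swap hφf_int).trans hbridge
    have hG2_val : ∫ u, G2 u ∂μ = pW w := by
      rw [hpw]
      refine integral_congr_ae ?_
      filter_upwards [pU'_ae] with u h
      rw [hG2]; dsimp only; rw [← h]
    -- pointwise identity g u * fUW (u, w) = G1 u - G2 u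
    have hmain : ∀ᵐ u ∂μ, g u * fUW (u, w) = G1 u - G2 u := by
      filter_upwards [hfU_pos, hci2, hFw.prod_right_ae] with u hup hciu hslice
      have hq : H u * (fUW (u, w) / fU u) = G1 u := by
        have e1 : G1 u = ∫ z, fUW (u, w) / fU u * (φ z * fUZ (u, z)) ∂ρ := by
          refine integral_congr_ae ?_
          filter_upwards [hciu] with z hz
          have hf : f (u, w, z) = fUW (u, w) * fUZ (u, z) / fU u :=
            (eq_div_iff hup.ne').2 hz
          rw [hf]; ring
        rw [e1, integral_const_mul]
        rw [hH]; ring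
      have e2 : g u * fUW (u, w) = (H u - pU' u) * (fUW (u, w) / fU u) := by
        rw [hg]; dsimp only; rw [div_mul_eq_mul_div, mul_div_assoc]
      rw [e2, sub_mul, hq]
    rw [integral_congr_ae hmain]
    by_cases hG2int : Integrable G2 μ
    · rw [integral_sub G1_int hG2int, hG1_val, hG2_val, sub_self]
    · refine integral_undef fun h => hG2int ?_
      refine (G1_int.sub h).congr (Filter.Eventually.of_forall fun u => ?_)
      simp only [Pi.sub_apply]; ring
  -- apply completeness and conclude
  have hzero := compl g g_meas g_fU_int hkey
  filter_upwards [hzero, hfU_pos, pU'_ae] with u h0 hup hpu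
  rw [hg] at h0; dsimp only at h0
  rw [div_mul_cancel₀ _ hup.ne'] at h0
  have : H u = pU' u := by linarith
  rw [show (∫ z, φ z * fUZ (u, z) ∂ρ) = H u from rfl, this, ← hpu]
end

section
/- Let (U, μ), (Z, ρ), (Y, λY) be σ-finite measure spaces and k : U × Z × Y → [0,∞) measurable and integrable with respect to μ⊗ρ⊗λY (the joint density of (U, Z, Y) conditionally on A = a). Define m(u) = ∫∫ k(u,z,y) dρ(z) dλY(y), kUZ(u,z) = ∫ k(u,z,y) dλY(y), kUY(u,y) = ∫ k(u,z,y) dρ(z). Assume: (i) Y ⟂ Z | U in density form: k(u,z,y)·m(u) = kUZ(u,z)·kUY(u,y) almost everywhere; (ii) m(u) > 0 for μ-almost every u; (iii) φ : Z → ℝ is bounded measurable and ω : U → [0,∞) is measurable with ∫ φ(z) kUZ(u,z) dρ(z) = ω(u)·m(u) for μ-almost every u; (iv) ξ : Y → ℝ is measurable with (u,z,y) ↦ |ξ(y)|·k(u,z,y) integrable with respect to μ⊗ρ⊗λY and (u,y) ↦ ω(u)·|ξ(y)|·kUY(u,y) integrable with respect to μ⊗λY. Then ∫∫∫ ξ(y)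 φ(z) k(u,z,y) dμ(u) dρ(z) dλY(y) = ∫ ω(u) · ( ∫ ξ(y) kUY(u,y) dλY(y) ) dμ(u). -/
open MeasureTheory

/-- Core identification computation: with joint density `k` of `(U, Z, Y)` given
`A = a` satisfying `Y ⟂ Z | U` in density form, `m > 0` a.e., a bounded measurable `φ` with
`∫ φ(z) kUZ(u,z) dρ(z) = ω(u)·m(u)` a.e., and an integrable outcome map `ξ`,
`∫∫∫ ξ(y) φ(z) k(u,z,y) dμ dρ dη = ∫ ω(u) (∫ ξ(y) kUY(u,y) dη) dμ`. -/
theorem identification_core_computation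
    {U Z Y : Type*} [MeasurableSpace U] [MeasurableSpace Z] [MeasurableSpace Y]
    (μ : Measure U) (ρ : Measure Z) (η : Measure Y)
    [SigmaFinite μ] [SigmaFinite ρ] [SigmaFinite η]
    (k : U × Z × Y → ℝ) (k_meas : Measurable k) (k_nonneg : ∀ x, 0 ≤ k x)
    (k_int : Integrable k (μ.prod (ρ.prod η)))
    (m : U → ℝ) (hm : ∀ u, m u = ∫ y, ∫ z, k (u, z, y) ∂ρ ∂η)
    (kUZ : U × Z → ℝ) (hkUZ : ∀ u z, kUZ (u, z) = ∫ y, k (u, z, y) ∂η)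
    (kUY : U × Y → ℝ) (hkUY : ∀ u y, kUY (u, y) = ∫ z, k (u, z, y) ∂ρ)
    (ci : ∀ᵐ x ∂μ.prod (ρ.prod η), k x * m x.1 = kUZ (x.1, x.2.1) * kUY (x.1, x.2.2))
    (hm_pos : ∀ᵐ u ∂μ, 0 < m u)
    (φ : Z → ℝ) (hφ_meas : Measurable φ) (hφ_bdd : ∃ C, ∀ z, |φ z| ≤ C)
    (ω : U → ℝ) (hω_meas : Measurable ω) (hω_nonneg : ∀ u, 0 ≤ ω u)
    (hω : ∀ᵐ u ∂μ, ∫ z, φ z * kUZ (u, z) ∂ρ = ω u * m u)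
    (ξ : Y → ℝ) (hξ_meas : Measurable ξ)
    (hint1 : Integrable (fun x : U × Z × Y => |ξ x.2.2| * k x) (μ.prod (ρ.prod η)))
    (hint2 : Integrable (fun x : U × Y => ω x.1 * |ξ x.2| * kUY x) (μ.prod η)) :
    ∫ y, ∫ z, ∫ u, ξ y * φ z * k (u, z, y) ∂μ ∂ρ ∂η =
      ∫ u, (ω u * ∫ y, ξ y * kUY (u, y) ∂η) ∂μ := by
  obtain ⟨C, hC⟩ := hφ_bdd
  set F : U × Z × Y → ℝ := fun x => ξ x.2.2 * φ x.2.1 * k x with hFdef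
  have hFmeas : Measurable F :=
    ((hξ_meas.comp (measurable_snd.comp measurable_snd)).mul
      (hφ_meas.comp (measurable_fst.comp measurable_snd))).mul k_meas
  have hF : Integrable F (μ.prod (ρ.prod η)) := by
    refine (hint1.const_mul (max C 0)).mono' hFmeas.aestronglyMeasurable ?_
    filter_upwards with x
    have h1 : |F x| = |ξ x.2.2| * |φ x.2.1| * k x := by
      simp [hFdef, abs_mul, abs_of_nonneg (k_nonneg x)]
    rw [Real.norm_eq_abs, h1]
    have h2 := mul_le_mul_of_nonneg_left ((hC x.2.1).trans (le_max_left C 0))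
      (mul_nonneg (abs_nonneg (ξ x.2.2)) (k_nonneg x))
    nlinarith [h2]
  have huncurry : Integrable (Function.uncurry fun u zy => F (u, zy)) (μ.prod (ρ.prod η)) := hF
  have hG : Integrable (fun zy => ∫ u, F (u, zy) ∂μ) (ρ.prod η) := hF.integral_prod_right
  have huncurry2 : Integrable (Function.uncurry fun z y => ∫ u, F (u, (z, y)) ∂μ) (ρ.prod η) := hG
  have step1 : ∫ y, ∫ z, ∫ u, ξ y * φ z * k (u, z, y) ∂μ ∂ρ ∂η
      = ∫ u, ∫ zy, F (u, zy) ∂(ρ.prod η) ∂μ := by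
    have h1 : ∫ u, ∫ zy, F (u, zy) ∂(ρ.prod η) ∂μ = ∫ zy, ∫ u, F (u, zy) ∂μ ∂(ρ.prod η) :=
      integral_integral_swap huncurry
    have h2 : ∫ zy, ∫ u, F (u, zy) ∂μ ∂(ρ.prod η) = ∫ z, ∫ y, ∫ u, F (u, (z, y)) ∂μ ∂η ∂ρ :=
      integral_prod _ hG
    have h3 : ∫ z, ∫ y, ∫ u, F (u, (z, y)) ∂μ ∂η ∂ρ = ∫ y, ∫ z, ∫ u, F (u, (z, y)) ∂μ ∂ρ ∂η :=
      integral_integral_swap huncurry2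
    rw [h1, h2, h3]
  have hci : ∀ᵐ u ∂μ, ∀ᵐ zy ∂(ρ.prod η),
      k (u, zy) * m u = kUZ (u, zy.1) * kUY (u, zy.2) := Measure.ae_ae_of_ae_prod ci
  have step2 : ∀ᵐ u ∂μ, ∫ zy, F (u, zy) ∂(ρ.prod η) = ω u * ∫ y, ξ y * kUY (u, y) ∂η := by
    filter_upwards [hci, hm_pos, hω] with u hu hmu hωu
    have hkey : ∀ᵐ zy ∂(ρ.prod η), F (u, zy) =
        (φ zy.1 * kUZ (u, zy.1) / m u) * (ξ zy.2 * kUY (u, zy.2)) := by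
      filter_upwards [hu] with zy hzy
      have hk : k (u, zy) = kUZ (u, zy.1) * kUY (u, zy.2) / m u := by
        field_simp
        linarith [hzy]
      show ξ zy.2 * φ zy.1 * k (u, zy) = _
      rw [hk]; ring
    rw [integral_congr_ae hkey,
      integral_prod_mul (fun z => φ z * kUZ (u, z) / m u) (fun y => ξ y * kUY (u, y))]
    rw [integral_div, hωu, mul_div_assoc, div_self hmu.ne', mul_one]
  rw [step1, integral_congr_ae step2]
end

section
/- Let 𝒰, 𝒲, 𝒜 be finite nonempty types and Q : 𝒰 × 𝒲 × 𝒜 → ℝ a nonnegative function (the joint pmf of (U, W, A)). Assume W ⟂ A | U holds in pmf form and Q_U(u) > 0 for all u. Fix a ∈ 𝒜 with Q_{UA}(u,a) > 0 for all u and Q_{WA}(w,a) > 0 for all w. Then for every w ∈ 𝒲: Σ_u (Q_U(u)/Q_{UA}(u,a)) · (Q(u,w,a)/Q_{WA}(w,a)) = Q_W(w)/Q_{WA}(w,a). In matrix notation: (1/P(A=a|U))ᵀ · P(U | W, A = a) = 1/P(A=a|W), where P(U|W,A=a)[u,w] = Q(u,w,a)/Q_{WA}(w,a), P(A=a|U=u)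 = Q_{UA}(u,a)/Q_U(u), and P(A=a|W=w) = Q_{WA}(w,a)/Q_W(w). -/
/-- Discrete Step 2: with joint pmf `Q` of `(U, W, A)` satisfying `W ⟂ A | U` in
pmf form, `Q_U > 0`, and for a fixed `a` with `Q_{UA}(·,a) > 0` and `Q_{WA}(·,a) > 0`, for every
`w`: `Σ_u (Q_U(u)/Q_{UA}(u,a)) · (Q(u,w,a)/Q_{WA}(w,a)) = Q_W(w)/Q_{WA}(w,a)`, i.e. the inverse
propensity weight `1/P(A=a|U)` converts to `1/P(A=a|W)`. -/
theorem discrete_inverse_propensity_conversion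
    {𝒰 𝒲 𝒜 : Type*} [Fintype 𝒰] [Fintype 𝒲] [Fintype 𝒜]
    [Nonempty 𝒰] [Nonempty 𝒲] [Nonempty 𝒜]
    (Q : 𝒰 × 𝒲 × 𝒜 → ℝ) (hQ : ∀ x, 0 ≤ Q x)
    (QU : 𝒰 → ℝ) (hQU : ∀ u, QU u = ∑ w, ∑ a, Q (u, w, a))
    (QW : 𝒲 → ℝ) (hQW : ∀ w, QW w = ∑ u, ∑ a, Q (u, w, a))
    (QUW : 𝒰 → 𝒲 → ℝ) (hQUW : ∀ u w, QUW u w = ∑ a, Q (u, w, a))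
    (QUA : 𝒰 → 𝒜 → ℝ) (hQUA : ∀ u a, QUA u a = ∑ w, Q (u, w, a))
    (QWA : 𝒲 → 𝒜 → ℝ) (hQWA : ∀ w a, QWA w a = ∑ u, Q (u, w, a))
    (ci : ∀ u w a, Q (u, w, a) * QU u = QUW u w * QUA u a)
    (hU_pos : ∀ u, 0 < QU u)
    (a : 𝒜) (hUA_pos : ∀ u, 0 < QUA u a) (hWA_pos : ∀ w, 0 < QWA w a) :
    ∀ w, ∑ u, (QU u / QUA u a) * (Q (u, w, a) / QWA w a) = QW w / QWA w a := by
  intro w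
  have key : ∀ u, (QU u / QUA u a) * (Q (u, w, a) / QWA w a) = QUW u w / QWA w a := by
    intro u
    have h := ci u w a
    rw [div_mul_div_comm, mul_comm (QU u), h, mul_comm (QUW u w),
      mul_div_mul_left _ _ (ne_of_gt (hUA_pos u))]
  calc ∑ u, (QU u / QUA u a) * (Q (u, w, a) / QWA w a)
      = ∑ u, QUW u w / QWA w a := by simp_rw [key]
    _ = (∑ u, QUW u w) / QWA w a := by rw [Finset.sum_div]
    _ = QW w / QWA w a := by
        rw [hQW w]
        simp_rw [hQUW]
end

section
/- Let 𝒴 and 𝒜 be finite nonempty types, n a positive natural number, and set 𝒰 = 𝒲 = 𝒵 = Fin n. Let Q : 𝒴 × 𝒰 × 𝒲 × 𝒵 × 𝒜 → ℝ be nonnegative with total sum 1 (the joint pmf of (Y,U,W,Z,A)), fix a ∈ 𝒜 and v : 𝒴 → ℝ, and define f_ATE(a) = Σ_u ( Σ_y v(y)·Q_{YUA}(y,u,a)/Q_{UA}(u,a) ) · Q_U(u). Assume the conditional independences (i) Y ⟂ Z | (U,A), (ii) W ⟂ Z | (U,A), (iii) W ⟂ A | U all hold in pmf form, and the positivity conditions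 Q_A(a) > 0, Q_U(u) > 0 and Q_{UA}(u,a) > 0 for all u, Q_{WA}(w,a) > 0 for all w. Define the square matrices M ∈ ℝ^{𝒵×𝒲} with M[z,w] = Q_{WZA}(w,z,a)/Q_{WA}(w,a) and N ∈ ℝ^{𝒵×𝒰} with N[z,u] = Q_{UZA}(u,z,a)/Q_{UA}(u,a), and assume M and N are invertible. Let P_{YZ|a} ∈ ℝ^{𝒴×𝒵} have entries Q_{YZA}(y,z,a)/Q_A(a) and c ∈ ℝ^{𝒲} have entries c(w) = Q_W(w)/Q_{WA}(w,a). Then f_ATE(a) = Q_A(a) · ( vᵀ · P_{YZ|a} · (Mᵀ)⁻¹ · c ). -/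
open Matrix

/-! Under the conditional independences every matrix in the formula factors through the hidden
confounder `U`: with `D = P(U | W, A = a)`, `B = P(Y, U | A = a)` and `g = 1 / P(A = a | U)`,
one has `M = N D`, `P_{YZ|a} = B Nᵀ` and `c = Dᵀ g`. Hence `P_{YZ|a} (Mᵀ)⁻¹ c = B g`, in which
`N` and `D` have cancelled, and `vᵀ B g` is the adjustment formula `f_ATE(a) / Q_A(a)`. -/

/-- The chain rule `P(z | w) = Σ_u P(z | u) P(u | w)` for `Z ⟂ W | U`, written with joint masses:
`p u = P(u, w, z)`, `q u = P(u, w)`, `s u = P(u, z)`, `r u = P(u)` and `t = P(w)`. -/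
theorem sum_div_eq_sum_div_mul_div_of_mul_eq {ι K : Type*} [Fintype ι] [Field K]
    {p q r s : ι → K} (t : K) (h : ∀ u, p u * r u = q u * s u) (hr : ∀ u, r u ≠ 0) :
    (∑ u, p u) / t = ∑ u, s u / r u * (q u / t) := by
  rw [Finset.sum_div]
  refine Finset.sum_congr rfl fun u _ => ?_
  rw [eq_div_iff (hr u) |>.mpr (h u)]
  ring

theorem Matrix.mul_transpose_mul_inv_mulVec_transpose_mulVec {m n R : Type*} [Fintype n]
    [DecidableEq n] [CommRing R] (B : Matrix m n R) {N D : Matrix n n R} (h : IsUnit (N * D))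
    (g : n → R) : (B * Nᵀ * (N * D)ᵀ⁻¹) *ᵥ (Dᵀ *ᵥ g) = B *ᵥ g := by
  have hdet : IsUnit (N.det * D.det) := by
    rw [← det_mul]; exact (isUnit_iff_isUnit_det _).mp h
  have hN : IsUnit Nᵀ.det := by rw [det_transpose]; exact isUnit_of_mul_isUnit_left hdet
  have hD : IsUnit Dᵀ.det := by rw [det_transpose]; exact isUnit_of_mul_isUnit_right hdet
  calc (B * Nᵀ * (N * D)ᵀ⁻¹) *ᵥ (Dᵀ *ᵥ g)
      = (B * (Nᵀ * Nᵀ⁻¹) * (Dᵀ⁻¹ * Dᵀ)) *ᵥ g := by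
        rw [transpose_mul, mul_inv_rev, mulVec_mulVec]; simp only [Matrix.mul_assoc]
    _ = B *ᵥ g := by rw [mul_nonsing_inv _ hN, nonsing_inv_mul _ hD, Matrix.mul_one, Matrix.mul_one]
theorem discrete_dose_response_identification_general
    {𝒴 𝒜 : Type*} [Fintype 𝒴] [Fintype 𝒜]
    (n : ℕ)
    (Q : 𝒴 × Fin n × Fin n × Fin n × 𝒜 → ℝ)
    (a : 𝒜) (v : 𝒴 → ℝ)
    -- marginal pmfs
    (QU : Fin n → ℝ)
    (QW : Fin n → ℝ) (hQW : ∀ w, QW w = ∑ y, ∑ u, ∑ z, ∑ a', Q (y, u, w, z, a'))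
    (QA : 𝒜 → ℝ)
    (QUW : Fin n → Fin n → ℝ) (hQUW : ∀ u w, QUW u w = ∑ y, ∑ z, ∑ a', Q (y, u, w, z, a'))
    (QUA : Fin n → 𝒜 → ℝ)
    (QWA : Fin n → 𝒜 → ℝ)
    (QYUA : 𝒴 → Fin n → 𝒜 → ℝ)
    (QUWA : Fin n → Fin n → 𝒜 → ℝ)
    (QUZA : Fin n → Fin n → 𝒜 → ℝ)
    (QWZA : Fin n → Fin n → 𝒜 → ℝ)
    (hQWZA : ∀ w z a', QWZA w z a' = ∑ y, ∑ u, Q (y, u, w, z, a'))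
    (QYZA : 𝒴 → Fin n → 𝒜 → ℝ) (hQYZA : ∀ y z a', QYZA y z a' = ∑ u, ∑ w, Q (y, u, w, z, a'))
    (QYUZA : 𝒴 → Fin n → Fin n → 𝒜 → ℝ)
    (hQYUZA : ∀ y u z a', QYUZA y u z a' = ∑ w, Q (y, u, w, z, a'))
    (QUWZA : Fin n → Fin n → Fin n → 𝒜 → ℝ)
    (hQUWZA : ∀ u w z a', QUWZA u w z a' = ∑ y, Q (y, u, w, z, a'))
    -- conditional independences in pmf form
    (ci1 : ∀ y u z a', QYUZA y u z a' * QUA u a' = QYUA y u a' * QUZA u z a')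
    (ci2 : ∀ u w z a', QUWZA u w z a' * QUA u a' = QUWA u w a' * QUZA u z a')
    (ci3 : ∀ u w a', QUWA u w a' * QU u = QUW u w * QUA u a')
    -- positivity conditions
    (hQA_pos : 0 < QA a)
    (hQUA_pos : ∀ u, 0 < QUA u a)
    -- matrices
    (M : Matrix (Fin n) (Fin n) ℝ) (hM : ∀ z w, M z w = QWZA w z a / QWA w a)
    (N : Matrix (Fin n) (Fin n) ℝ) (hN : ∀ z u, N z u = QUZA u z a / QUA u a)
    (hM_inv : IsUnit M)
    (PYZ : Matrix 𝒴 (Fin n) ℝ) (hPYZ : ∀ y z, PYZ y z = QYZA y z a / QA a)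
    (c : Fin n → ℝ) (hc : ∀ w, c w = QW w / QWA w a) :
    ∑ u, (∑ y, v y * QYUA y u a / QUA u a) * QU u =
      QA a * (v ⬝ᵥ ((PYZ * (Mᵀ)⁻¹) *ᵥ c)) := by
  set D : Matrix (Fin n) (Fin n) ℝ := of fun u w => QUWA u w a / QWA w a
  set B : Matrix 𝒴 (Fin n) ℝ := of fun y u => QYUA y u a / QA a
  set g : Fin n → ℝ := fun u => QU u / QUA u a
  have hQUA : ∀ u, QUA u a ≠ 0 := fun u => (hQUA_pos u).ne'
  have hMND : M = N * D := by
    ext z w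
    rw [hM, hQWZA, Finset.sum_comm]
    simp only [← hQUWZA]
    rw [sum_div_eq_sum_div_mul_div_of_mul_eq _ (fun u => ci2 u w z a) hQUA]
    simp [mul_apply, hN, D]
  have hPYZ_eq : PYZ = B * Nᵀ := by
    ext y z
    rw [hPYZ, hQYZA]
    simp only [← hQYUZA]
    rw [sum_div_eq_sum_div_mul_div_of_mul_eq _ (fun u => ci1 y u z a) hQUA]
    simp [mul_apply, hN, B, mul_comm]
  have hc_eq : c = Dᵀ *ᵥ g := by
    ext w
    rw [hc, hQW, Finset.sum_comm]
    simp only [← hQUW]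
    rw [sum_div_eq_sum_div_mul_div_of_mul_eq _ (fun u => (ci3 u w a).symm) hQUA]
    simp [mulVec, dotProduct, D, g, mul_comm]
  rw [hPYZ_eq, hc_eq, hMND, mul_transpose_mul_inv_mulVec_transpose_mulVec B (hMND ▸ hM_inv)]
  simp only [dotProduct, mulVec, Finset.mul_sum, Finset.sum_mul, B, g, of_apply]
  rw [Finset.sum_comm]
  refine Finset.sum_congr rfl fun u _ => Finset.sum_congr rfl fun y _ => ?_
  field_simp [hQA_pos.ne']

/-- Identifiability of the dose-response curve in the discrete case:
`f_ATE(a) = Σ_u E[v(Y) | U = u, A = a] · Q_U(u)` equals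
`Q_A(a) · ( vᵀ · P(Y,Z|A=a) · P^{-T}(Z|W,A=a) · (1/P(A=a|W)) )` under the proxy conditional
independences, positivity, and invertibility of `M = P(Z|W,A=a)` and `N = P(Z|U,A=a)`. -/
theorem discrete_dose_response_identification
    {𝒴 𝒜 : Type*} [Fintype 𝒴] [Fintype 𝒜] [Nonempty 𝒴] [Nonempty 𝒜]
    (n : ℕ) (hn : 0 < n)
    (Q : 𝒴 × Fin n × Fin n × Fin n × 𝒜 → ℝ)
    (hQ_nonneg : ∀ x, 0 ≤ Q x)
    (hQ_sum : ∑ y, ∑ u, ∑ w, ∑ z, ∑ a, Q (y, u, w, z, a) = 1)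
    (a : 𝒜) (v : 𝒴 → ℝ)
    -- marginal pmfs
    (QU : Fin n → ℝ) (hQU : ∀ u, QU u = ∑ y, ∑ w, ∑ z, ∑ a', Q (y, u, w, z, a'))
    (QW : Fin n → ℝ) (hQW : ∀ w, QW w = ∑ y, ∑ u, ∑ z, ∑ a', Q (y, u, w, z, a'))
    (QA : 𝒜 → ℝ) (hQA : ∀ a', QA a' = ∑ y, ∑ u, ∑ w, ∑ z, Q (y, u, w, z, a'))
    (QUW : Fin n → Fin n → ℝ) (hQUW : ∀ u w, QUW u w = ∑ y, ∑ z, ∑ a', Q (y, u, w, z, a'))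
    (QUA : Fin n → 𝒜 → ℝ) (hQUA : ∀ u a', QUA u a' = ∑ y, ∑ w, ∑ z, Q (y, u, w, z, a'))
    (QWA : Fin n → 𝒜 → ℝ) (hQWA : ∀ w a', QWA w a' = ∑ y, ∑ u, ∑ z, Q (y, u, w, z, a'))
    (QYUA : 𝒴 → Fin n → 𝒜 → ℝ) (hQYUA : ∀ y u a', QYUA y u a' = ∑ w, ∑ z, Q (y, u, w, z, a'))
    (QUWA : Fin n → Fin n → 𝒜 → ℝ)
    (hQUWA : ∀ u w a', QUWA u w a' = ∑ y, ∑ z, Q (y, u, w, z, a'))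
    (QUZA : Fin n → Fin n → 𝒜 → ℝ)
    (hQUZA : ∀ u z a', QUZA u z a' = ∑ y, ∑ w, Q (y, u, w, z, a'))
    (QWZA : Fin n → Fin n → 𝒜 → ℝ)
    (hQWZA : ∀ w z a', QWZA w z a' = ∑ y, ∑ u, Q (y, u, w, z, a'))
    (QYZA : 𝒴 → Fin n → 𝒜 → ℝ) (hQYZA : ∀ y z a', QYZA y z a' = ∑ u, ∑ w, Q (y, u, w, z, a'))
    (QYUZA : 𝒴 → Fin n → Fin n → 𝒜 → ℝ)
    (hQYUZA : ∀ y u z a', QYUZA y u z a' = ∑ w, Q (y, u, w, z, a'))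
    (QUWZA : Fin n → Fin n → Fin n → 𝒜 → ℝ)
    (hQUWZA : ∀ u w z a', QUWZA u w z a' = ∑ y, Q (y, u, w, z, a'))
    -- conditional independences in pmf form
    (ci1 : ∀ y u z a', QYUZA y u z a' * QUA u a' = QYUA y u a' * QUZA u z a')
    (ci2 : ∀ u w z a', QUWZA u w z a' * QUA u a' = QUWA u w a' * QUZA u z a')
    (ci3 : ∀ u w a', QUWA u w a' * QU u = QUW u w * QUA u a')
    -- positivity conditions
    (hQA_pos : 0 < QA a)
    (hQU_pos : ∀ u, 0 < QU u)
    (hQUA_pos : ∀ u, 0 < QUA u a)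
    (hQWA_pos : ∀ w, 0 < QWA w a)
    -- matrices
    (M : Matrix (Fin n) (Fin n) ℝ) (hM : ∀ z w, M z w = QWZA w z a / QWA w a)
    (N : Matrix (Fin n) (Fin n) ℝ) (hN : ∀ z u, N z u = QUZA u z a / QUA u a)
    (hM_inv : IsUnit M) (hN_inv : IsUnit N)
    (PYZ : Matrix 𝒴 (Fin n) ℝ) (hPYZ : ∀ y z, PYZ y z = QYZA y z a / QA a)
    (c : Fin n → ℝ) (hc : ∀ w, c w = QW w / QWA w a) :
    ∑ u, (∑ y, v y * QYUA y u a / QUA u a) * QU u =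
      QA a * (v ⬝ᵥ ((PYZ * (Mᵀ)⁻¹) *ᵥ c)) :=
  discrete_dose_response_identification_general n Q a v QU QW hQW QA QUW hQUW QUA QWA QYUA QUWA QUZA
    QWZA hQWZA QYZA hQYZA QYUZA hQYUZA QUWZA hQUWZA ci1 ci2 ci3 hQA_pos hQUA_pos M hM N hN hM_inv
    PYZ hPYZ c hc
end
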